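/- arXiv:2001.01201 — 3 statements merged into one kernel-verified Lean document; each statement's English description precedes it below -/
import Mathlib

section
/- Fix N > 0. There exist constants C > 0 and a₀ > 0 such that for all a with 0 < a ≤ a₀, ∫_ℝ q₀(z)·|L(z) − μ₀|³ dz ≤ C·a⁶, where μ₀ = ∫_ℝ q₀(z)·L(z) dz. In other words, the third absolute central moment of the log-likelihood ratio L under q₀ is O(a⁶) as a → 0⁺. -/
/-!
Completing the square gives `q̃ / q₀ = exp (-a²/N) · cosh (2az/N)`, so
`L(z) = -a²/N + log cosh (2az/N)`, and `0 ≤ log cosh x ≤ x²/2` yields `|L(z)| ≤ a² g(z)` for the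
quadratic `g(z) = 2z²/N² + 1/N`. Averaging against `q₀` bounds the mean by `a² E g`, hence
`|L - μ₀| ≤ a² (g + E g)` pointwise, and the third moment is at most `a⁶ E (g + E g)³`, a finite
Gaussian moment of a polynomial.
-/

open MeasureTheory

/-- Density of the Gaussian distribution with mean `0` and variance `N/2`. -/
noncomputable def q0 (N z : ℝ) : ℝ := (Real.sqrt (Real.pi * N))⁻¹ * Real.exp (-z ^ 2 / N)

/-- Density of the Gaussian distribution with mean `a` and variance `N/2`. -/
noncomputable def qa (N a z : ℝ) : ℝ := (Real.sqrt (Real.pi * N))⁻¹ * Real.exp (-(z - a) ^ 2 / N)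

/-- The binary mixture density `½ q_a + ½ q_{-a}`. -/
noncomputable def qmix (N a z : ℝ) : ℝ := (1 / 2) * qa N a z + (1 / 2) * qa N (-a) z

/-- The log-likelihood ratio `log (q̃(z)/q₀(z))`. -/
noncomputable def llr (N a z : ℝ) : ℝ := Real.log (qmix N a z / q0 N z)

open Polynomial

section CentralMoment

variable {α : Type*} [MeasurableSpace α] {μ : Measure α} {w L g : α → ℝ} {c : ℝ}

lemma abs_integral_mul_le_of_abs_le (hw : ∀ x, 0 ≤ w x) (hg : Integrable (fun x => w x * g x) μ)
    (hL : ∀ x, |L x| ≤ c * g x) :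
    |∫ x, w x * L x ∂μ| ≤ c * ∫ x, w x * g x ∂μ := by
  rw [← integral_const_mul, ← Real.norm_eq_abs]
  refine norm_integral_le_of_norm_le (hg.const_mul c) (ae_of_all _ fun x => ?_)
  rw [Real.norm_eq_abs, abs_mul, abs_of_nonneg (hw x), mul_left_comm]
  exact mul_le_mul_of_nonneg_left (hL x) (hw x)

lemma integral_mul_abs_sub_integral_pow_le_of_abs_le (n : ℕ) (hw : ∀ x, 0 ≤ w x)
    (hg : Integrable (fun x => w x * g x) μ)
    (hgn : Integrable (fun x => w x * (g x + ∫ y, w y * g y ∂μ) ^ n) μ)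
    (hL : ∀ x, |L x| ≤ c * g x) :
    ∫ x, w x * |L x - ∫ y, w y * L y ∂μ| ^ n ∂μ
      ≤ c ^ n * ∫ x, w x * (g x + ∫ y, w y * g y ∂μ) ^ n ∂μ := by
  set m := ∫ y, w y * L y ∂μ
  set B := ∫ y, w y * g y ∂μ
  have hdev (x : α) : |L x - m| ≤ c * (g x + B) := calc
    |L x - m| ≤ |L x| + |m| := abs_sub _ _
    _ ≤ c * g x + c * B := add_le_add (hL x) (abs_integral_mul_le_of_abs_le hw hg hL)
    _ = c * (g x + B) := by ring
  rw [← integral_const_mul]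
  refine integral_mono_of_nonneg (ae_of_all _ fun x => mul_nonneg (hw x) (by positivity))
    (hgn.const_mul _) (ae_of_all _ fun x => ?_)
  calc w x * |L x - m| ^ n ≤ w x * (c * (g x + B)) ^ n :=
        mul_le_mul_of_nonneg_left (pow_le_pow_left₀ (abs_nonneg _) (hdev x) n) (hw x)
    _ = c ^ n * (w x * (g x + B) ^ n) := by rw [mul_pow]; ring

end CentralMoment

lemma q0_nonneg (N z : ℝ) : 0 ≤ q0 N z := by
  unfold q0; positivity

lemma integrable_q0_mul_eval {N : ℝ} (hN : 0 < N) (p : ℝ[X]) :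
    Integrable (fun z => q0 N z * p.eval z) := by
  induction p using Polynomial.induction_on' with
  | add p q hp hq =>
    simp only [eval_add, mul_add]
    exact hp.add hq
  | monomial n b =>
    have hmon : Integrable (fun z : ℝ => z ^ n * Real.exp (-(1 / N) * z ^ 2)) := by
      simpa [Real.rpow_natCast] using
        integrable_rpow_mul_exp_neg_mul_sq (b := 1 / N) (by positivity)
          (s := n) (neg_one_lt_zero.trans_le n.cast_nonneg)
    convert hmon.const_mul ((Real.sqrt (Real.pi * N))⁻¹ * b) using 2 with z
    rw [q0, eval_monomial, neg_div, div_eq_inv_mul (z ^ 2), neg_mul, one_div]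
    ring

lemma llr_eq_log_cosh {N : ℝ} (hN : 0 < N) (a z : ℝ) :
    llr N a z = -a ^ 2 / N + Real.log (Real.cosh (2 * a * z / N)) := by
  have hshift (b : ℝ) : Real.exp (-(z - b) ^ 2 / N)
      = Real.exp (-b ^ 2 / N) * Real.exp (2 * b * z / N) * Real.exp (-z ^ 2 / N) := by
    rw [← Real.exp_add, ← Real.exp_add]
    congr 1
    field_simp
    ring
  have hratio : qmix N a z / q0 N z = Real.exp (-a ^ 2 / N) * Real.cosh (2 * a * z / N) := by
    have hsqrt : Real.sqrt (Real.pi * N) ≠ 0 := (Real.sqrt_pos.2 (by positivity)).ne'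
    rw [qmix, qa, qa, q0, hshift, hshift, Real.cosh_eq, neg_sq]
    field_simp
  rw [_root_.llr, hratio, Real.log_mul (Real.exp_ne_zero _) (Real.cosh_pos _).ne', Real.log_exp]

lemma log_cosh_le_sq_div_two (x : ℝ) : Real.log (Real.cosh x) ≤ x ^ 2 / 2 :=
  (Real.log_le_log (Real.cosh_pos x) (Real.cosh_le_exp_half_sq x)).trans_eq (Real.log_exp _)

lemma abs_llr_le {N : ℝ} (hN : 0 < N) (a z : ℝ) :
    |llr N a z| ≤ a ^ 2 * (2 / N ^ 2 * z ^ 2 + 1 / N) := by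
  rw [llr_eq_log_cosh hN, abs_le]
  have hlog_nonneg := Real.log_nonneg (Real.one_le_cosh (2 * a * z / N))
  have hlog_le := log_cosh_le_sq_div_two (2 * a * z / N)
  have hsplit : a ^ 2 * (2 / N ^ 2 * z ^ 2 + 1 / N) = (2 * a * z / N) ^ 2 / 2 + a ^ 2 / N := by
    field_simp
  have ha : 0 ≤ a ^ 2 / N := by positivity
  rw [hsplit, neg_div]
  constructor <;> linarith

/-- The third absolute central moment of the log-likelihood ratio `L` under `q₀` is `O(a⁶)`. -/
theorem third_moment_llr_q0 (N : ℝ) (hN : 0 < N) :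
    ∃ C > (0 : ℝ), ∃ a₀ > (0 : ℝ), ∀ a : ℝ, 0 < a → a ≤ a₀ →
      (∫ z : ℝ, q0 N z * |llr N a z - ∫ w : ℝ, q0 N w * llr N a w| ^ 3) ≤ C * a ^ 6 := by
  set g : ℝ → ℝ := fun z => 2 / N ^ 2 * z ^ 2 + 1 / N
  set B := ∫ z, q0 N z * g z
  set M := ∫ z, q0 N z * (g z + B) ^ 3
  have hg : Integrable (fun z => q0 N z * g z) := by
    convert integrable_q0_mul_eval hN (C (2 / N ^ 2) * X ^ 2 + C (1 / N)) using 3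
    simp [g]
  have hg3 : Integrable (fun z => q0 N z * (g z + B) ^ 3) := by
    convert integrable_q0_mul_eval hN ((C (2 / N ^ 2) * X ^ 2 + C (1 / N) + C B) ^ 3) using 3
    simp [g]
  have hB : 0 ≤ B := integral_nonneg fun z => mul_nonneg (q0_nonneg N z) (by positivity)
  have hM : 0 ≤ M := integral_nonneg fun z => mul_nonneg (q0_nonneg N z) (by positivity)
  refine ⟨M + 1, by positivity, 1, one_pos, fun a _ _ => ?_⟩
  calc (∫ z, q0 N z * |llr N a z - ∫ w, q0 N w * llr N a w| ^ 3)
      ≤ (a ^ 2) ^ 3 * M :=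
        integral_mul_abs_sub_integral_pow_le_of_abs_le 3 (q0_nonneg N) hg hg3 (abs_llr_le hN a)
    _ ≤ (M + 1) * a ^ 6 := by nlinarith [pow_nonneg (sq_nonneg a) 3]
end

section
/- Let N_w > 0 and let ν₁, ν₂ > 0 be constants such that for every n ≥ 1 and every nonempty finite 𝒞 ⊆ ℝⁿ, V(q̂, q₀^{⊗n}) ≥ 1 − 2·Q(P_min/(√(2n)·N_w)) − P_min²/(√π·N_w²·n^{3/2}) − (ν₁+ν₂)/√n, where P_min = min_{x∈𝒞}‖x‖₂², q̂(z) = (1/|𝒞|)·∑_{x∈𝒞}∏_{i=1}^n (πN_w)^{−1/2}·exp(−(zᵢ−xᵢ)²/N_w), and q₀^{⊗n}(z) = ∏_{i=1}^n (πN_w)^{−1/2}·exp(−zᵢ²/N_w). Let δ ∈ (0,1), γ ∈ [0,1], ν > 0, n ≥ 1 be such that θ := (1−δ)/2 − 2ν²/(√(πn)·N_w²) − γ lies in (0, 1/2), and set A = √2·N_w·t_θ where t_θ > 0 satisfies Q(t_θ) = θ, and assume 4ν² ≥ A² + √π·N_w²·(ν₁+ν₂). Then every nonempty finite set 𝒞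 ⊆ ℝⁿ with V(q̂, q₀^{⊗n}) ≤ δ contains a low-power subset of proportional size: |{x ∈ 𝒞 : ‖x‖₂² ≤ A·√n}| ≥ γ·|𝒞|. -/
/-!
Split `𝒞` into its low-power part `C₁` and its high-power part `C₂`. Shrinking `C₂` by the
factor `c = √(A√n / P_min(C₂)) < 1` gives a code of minimum power exactly `A√n`, to which the
converse bound applies; by the choice of `t_θ` and `A` its variational distance to noise is at least `δ + 2γ`.
Shrinking is the same as passing the channel output through the Gaussian Markov kernel
`u ↦ c u + noise`, which fixes the noise density and so does not increase the distance, and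
removing `C₁` from `𝒞` changes the unnormalised `L¹` distance by at most `2|C₁|`. With `V ≤ δ`
this gives `(|𝒞| - |C₁|)(δ + 2γ) ≤ |𝒞| δ + |C₁|`, and `δ + 2γ ≤ 1` forces `|C₁| ≥ γ |𝒞|`.
-/

open MeasureTheory

/-- The standard normal tail function `Q(λ) = ∫_λ^∞ (2π)^{-1/2} e^{-u²/2} du`. -/
noncomputable def gaussQ (l : ℝ) : ℝ :=
  ∫ u in Set.Ioi l, (Real.sqrt (2 * Real.pi))⁻¹ * Real.exp (-u ^ 2 / 2)

open Finset

lemma qa_pos {N : ℝ} (hN : 0 < N) (a z : ℝ) : 0 < qa N a z := by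
  unfold qa; positivity

lemma integral_qa {N : ℝ} (hN : 0 < N) (a : ℝ) : ∫ z, qa N a z = 1 := by
  have hshift : (fun z => Real.exp (-(z - a) ^ 2 / N))
      = fun z => (fun t => Real.exp (-(1 / N) * t ^ 2)) (z - a) := by
    funext z; ring_nf
  unfold qa
  rw [integral_const_mul, hshift,
    integral_sub_right_eq_self (fun t => Real.exp (-(1 / N) * t ^ 2)) a, integral_gaussian,
    div_div_eq_mul_div, div_one, inv_mul_cancel₀ (by positivity)]

lemma integrable_qa {N : ℝ} (hN : 0 < N) (a : ℝ) : Integrable (qa N a) :=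
  .of_integral_ne_zero (by simp [integral_qa hN])

/-- Completing the square: the joint density of `u ~ qa N x` and `z = c u + noise` is the
marginal of `z` times the posterior of `u` given `z`. -/
lemma qa_mul_qa_mul_eq {N c : ℝ} (hN : N ≠ 0) (hc : c ^ 2 ≠ 1) (x z u : ℝ) :
    qa N x u * qa ((1 - c ^ 2) * N) (c * u) z
      = qa N (c * x) z * qa ((1 - c ^ 2) * N) ((1 - c ^ 2) * x + c * z) u := by
  have hc' : 1 - c ^ 2 ≠ 0 := sub_ne_zero.2 (Ne.symm hc)
  have hexp : -(u - x) ^ 2 / N + -(z - c * u) ^ 2 / ((1 - c ^ 2) * N)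
      = -(z - c * x) ^ 2 / N + -(u - ((1 - c ^ 2) * x + c * z)) ^ 2 / ((1 - c ^ 2) * N) := by
    field_simp
    ring
  unfold qa
  rw [mul_mul_mul_comm, ← Real.exp_add, hexp, Real.exp_add]
  ring

lemma integral_qa_mul_qa {N c : ℝ} (hN : 0 < N) (hc : c ^ 2 < 1) (x z : ℝ) :
    ∫ u, qa N x u * qa ((1 - c ^ 2) * N) (c * u) z = qa N (c * x) z := by
  have hM : 0 < (1 - c ^ 2) * N := mul_pos (by linarith) hN
  simp_rw [qa_mul_qa_mul_eq hN.ne' hc.ne]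
  rw [integral_const_mul, integral_qa hM, mul_one]

theorem integral_abs_integral_mul_le {α β : Type*} [MeasurableSpace α] [MeasurableSpace β]
    {μ : Measure α} {ν : Measure β} [SFinite μ] [SFinite ν] {f : α → ℝ} {K : α → β → ℝ}
    (hf : Integrable f μ) (hK : AEStronglyMeasurable (Function.uncurry K) (μ.prod ν))
    (hK_nonneg : ∀ u z, 0 ≤ K u z) (hK_one : ∀ u, ∫ z, K u z ∂ν = 1) :
    ∫ z, |∫ u, f u * K u z ∂μ| ∂ν ≤ ∫ u, |f u| ∂μ := by
  set F : α × β → ℝ := fun p => |f p.1| * K p.1 p.2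
  have hF_row : ∀ u, ∫ z, F (u, z) ∂ν = |f u| := fun u => by
    simp only [F, integral_const_mul, hK_one, mul_one]
  have hF : Integrable F (μ.prod ν) := by
    have hF_meas : AEStronglyMeasurable F (μ.prod ν) := hf.1.comp_fst.norm.mul hK
    refine (integrable_prod_iff hF_meas).2 ⟨.of_forall fun u => ?_, ?_⟩
    · have hK_row : Integrable (K u) ν := .of_integral_ne_zero (by simp [hK_one])
      exact hK_row.const_mul |f u|
    · have hnorm : ∀ p, ‖F p‖ = F p := fun p =>
        Real.norm_of_nonneg (mul_nonneg (abs_nonneg _) (hK_nonneg _ _))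
      simpa only [hnorm, hF_row] using hf.abs
  calc ∫ z, |∫ u, f u * K u z ∂μ| ∂ν
      ≤ ∫ z, ∫ u, F (u, z) ∂μ ∂ν := by
        refine integral_mono_of_nonneg (.of_forall fun _ => abs_nonneg _)
          hF.integral_prod_right (.of_forall fun z => ?_)
        refine (abs_integral_le_integral_abs).trans_eq (integral_congr_ae (.of_forall fun u => ?_))
        simp [F, abs_mul, abs_of_nonneg (hK_nonneg u z)]
    _ = ∫ u, ∫ z, F (u, z) ∂ν ∂μ := (integral_integral_swap hF).symm
    _ = ∫ u, |f u| ∂μ := by simp_rw [hF_row]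

section

variable {ι : Type*} [Fintype ι]

noncomputable def gaussProd (N : ℝ) (a z : ι → ℝ) : ℝ := ∏ i, qa N (a i) (z i)

lemma gaussProd_pos {N : ℝ} (hN : 0 < N) (a z : ι → ℝ) : 0 < gaussProd N a z :=
  prod_pos fun _ _ => qa_pos hN _ _

lemma continuous_gaussProd (N : ℝ) :
    Continuous fun p : (ι → ℝ) × (ι → ℝ) => gaussProd N p.1 p.2 := by
  unfold gaussProd qa; fun_prop

lemma integral_gaussProd {N : ℝ} (hN : 0 < N) (a : ι → ℝ) : ∫ z, gaussProd N a z = 1 := by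
  simp [gaussProd, integral_fintype_prod_volume_eq_prod (fun i => qa N (a i)), integral_qa hN]

lemma integrable_gaussProd {N : ℝ} (hN : 0 < N) (a : ι → ℝ) : Integrable (gaussProd N a) :=
  .of_integral_ne_zero (by simp [integral_gaussProd hN])

lemma integral_gaussProd_mul_gaussProd {N c : ℝ} (hN : 0 < N) (hc : c ^ 2 < 1) (x z : ι → ℝ) :
    ∫ u, gaussProd N x u * gaussProd ((1 - c ^ 2) * N) (c • u) z = gaussProd N (c • x) z := by
  simp_rw [gaussProd, ← prod_mul_distrib, Pi.smul_apply, smul_eq_mul]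
  rw [integral_fintype_prod_volume_eq_prod
    (fun i u => qa N (x i) u * qa ((1 - c ^ 2) * N) (c * u) (z i))]
  simp_rw [integral_qa_mul_qa hN hc]

lemma integrable_gaussProd_mul_gaussProd {N c : ℝ} (hN : 0 < N) (hc : c ^ 2 < 1) (x z : ι → ℝ) :
    Integrable fun u => gaussProd N x u * gaussProd ((1 - c ^ 2) * N) (c • u) z :=
  .of_integral_ne_zero <| by
    rw [integral_gaussProd_mul_gaussProd hN hc]; exact (gaussProd_pos hN _ _).ne'

lemma prod_q0_eq_gaussProd (N : ℝ) (z : ι → ℝ) : ∏ i, q0 N (z i) = gaussProd N 0 z := by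
  simp [gaussProd, q0, qa]

/-- `∫ |excessDensity N s|` is `2 |s| V(q̂, q₀^{⊗n})` for the code `s`. -/
noncomputable def excessDensity (N : ℝ) (s : Finset (ι → ℝ)) (z : ι → ℝ) : ℝ :=
  ∑ x ∈ s, gaussProd N x z - #s * gaussProd N 0 z

lemma integrable_excessDensity {N : ℝ} (hN : 0 < N) (s : Finset (ι → ℝ)) :
    Integrable (excessDensity N s) :=
  (integrable_finsetSum _ fun x _ => integrable_gaussProd hN x).sub
    ((integrable_gaussProd hN 0).const_mul _)

lemma half_integral_abs_sub_eq {N : ℝ} {s : Finset (ι → ℝ)} (hs : s.Nonempty) :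
    (1 / 2) * ∫ z : ι → ℝ, |(#s : ℝ)⁻¹ * (∑ x ∈ s, ∏ i, qa N (x i) (z i)) - ∏ i, q0 N (z i)|
      = (∫ z, |excessDensity N s z|) / (2 * #s) := by
  have hcard : (0 : ℝ) < #s := by exact_mod_cast hs.card_pos
  have hpoint : ∀ z : ι → ℝ, |(#s : ℝ)⁻¹ * (∑ x ∈ s, ∏ i, qa N (x i) (z i)) - ∏ i, q0 N (z i)|
      = (#s : ℝ)⁻¹ * |excessDensity N s z| := fun z => by
    rw [prod_q0_eq_gaussProd, excessDensity, ← abs_of_pos (inv_pos.2 hcard), ← abs_mul,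
      abs_of_pos (inv_pos.2 hcard), mul_sub, inv_mul_cancel_left₀ hcard.ne']
    rfl
  simp_rw [hpoint, integral_const_mul]
  field_simp

lemma integral_abs_excessDensity_le {N : ℝ} (hN : 0 < N) (s : Finset (ι → ℝ)) :
    ∫ z, |excessDensity N s z| ≤ 2 * #s := by
  have hsum : Integrable fun z => ∑ x ∈ s, gaussProd N x z :=
    integrable_finsetSum _ fun x _ => integrable_gaussProd hN x
  have hnoise : Integrable fun z : ι → ℝ => (#s : ℝ) * gaussProd N 0 z :=
    (integrable_gaussProd hN 0).const_mul _
  calc ∫ z, |excessDensity N s z|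
      ≤ ∫ z, (∑ x ∈ s, gaussProd N x z + (#s : ℝ) * gaussProd N 0 z) := by
        refine integral_mono (integrable_excessDensity hN s).abs (hsum.add hnoise) fun z => ?_
        refine (abs_sub _ _).trans_eq ?_
        rw [abs_of_nonneg (sum_nonneg fun x _ => (gaussProd_pos hN x z).le),
          abs_of_nonneg (mul_nonneg (Nat.cast_nonneg _) (gaussProd_pos hN 0 z).le)]
    _ = 2 * #s := by
        rw [integral_add hsum hnoise, integral_finsetSum _ fun x _ => integrable_gaussProd hN x,
          integral_const_mul]
        simp [integral_gaussProd hN]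
        ring

lemma integral_abs_excessDensity_sdiff_le {N : ℝ} (hN : 0 < N) {s u : Finset (ι → ℝ)}
    (hus : u ⊆ s) :
    ∫ z, |excessDensity N (s \ u) z| ≤ (∫ z, |excessDensity N s z|) + 2 * #u := by
  have hsplit : excessDensity N (s \ u) = excessDensity N s - excessDensity N u := by
    funext z
    simp only [excessDensity, Pi.sub_apply, ← sum_sdiff hus (f := fun x => gaussProd N x z),
      card_sdiff_of_subset hus, Nat.cast_sub (card_le_card hus)]
    ring
  calc ∫ z, |excessDensity N (s \ u) z|
      ≤ ∫ z, (|excessDensity N s z| + |excessDensity N u z|) := by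
        rw [hsplit]
        have hs := integrable_excessDensity hN s
        have hu := integrable_excessDensity hN u
        exact integral_mono (hs.sub hu).abs (hs.abs.add hu.abs) fun z => abs_sub _ _
    _ ≤ (∫ z, |excessDensity N s z|) + 2 * #u := by
        rw [integral_add (integrable_excessDensity hN s).abs (integrable_excessDensity hN u).abs]
        linarith [integral_abs_excessDensity_le hN u]

lemma integral_excessDensity_mul_gaussProd {N c : ℝ} (hN : 0 < N) (hc : c ^ 2 < 1)
    (s : Finset (ι → ℝ)) (z : ι → ℝ) :
    ∫ u, excessDensity N s u * gaussProd ((1 - c ^ 2) * N) (c • u) z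
      = ∑ x ∈ s, gaussProd N (c • x) z - #s * gaussProd N 0 z := by
  have hint := integrable_gaussProd_mul_gaussProd hN hc (z := z)
  have hdistrib : ∀ u, excessDensity N s u * gaussProd ((1 - c ^ 2) * N) (c • u) z
      = ∑ x ∈ s, gaussProd N x u * gaussProd ((1 - c ^ 2) * N) (c • u) z
        - #s * (gaussProd N 0 u * gaussProd ((1 - c ^ 2) * N) (c • u) z) := fun u => by
    rw [excessDensity, sub_mul (∑ x ∈ s, gaussProd N x u), sum_mul, mul_assoc]
  simp_rw [hdistrib]
  rw [integral_sub (integrable_finsetSum _ fun x _ => hint x) ((hint 0).const_mul _),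
    integral_finsetSum _ fun x _ => hint x, integral_const_mul]
  simp_rw [integral_gaussProd_mul_gaussProd hN hc, smul_zero]

/-- Shrinking the code by `c` is the same as passing the channel output through the Markov kernel
`u ↦ c u + noise` of variance `(1 - c²) N / 2`, which fixes the noise density. -/
lemma integral_abs_excessDensity_image_smul_le {N c : ℝ} (hN : 0 < N) (hc0 : c ≠ 0)
    (hc : c ^ 2 < 1) (s : Finset (ι → ℝ)) :
    ∫ z, |excessDensity N (s.image (c • ·)) z| ≤ ∫ z, |excessDensity N s z| := by
  have hM : 0 < (1 - c ^ 2) * N := mul_pos (by linarith) hN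
  have hinj : Function.Injective (c • · : (ι → ℝ) → ι → ℝ) := smul_right_injective _ hc0
  have hsmooth : ∀ z, excessDensity N (s.image (c • ·)) z
      = ∫ u, excessDensity N s u * gaussProd ((1 - c ^ 2) * N) (c • u) z := fun z => by
    rw [integral_excessDensity_mul_gaussProd hN hc, excessDensity, sum_image hinj.injOn,
      card_image_of_injective _ hinj]
  simp_rw [hsmooth]
  refine integral_abs_integral_mul_le (integrable_excessDensity hN s) ?_
    (fun u z => (gaussProd_pos hM _ _).le) fun u => integral_gaussProd hM _
  exact ((continuous_gaussProd _).comp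
    ((continuous_const_smul c).prodMap continuous_id)).aestronglyMeasurable

def power (x : ι → ℝ) : ℝ := ∑ i, x i ^ 2

lemma power_smul (c : ℝ) (x : ι → ℝ) : power (c • x) = c ^ 2 * power x := by
  simp [power, mul_sum, mul_pow]

lemma inf'_image_smul_power {s : Finset (ι → ℝ)} (hs : s.Nonempty) (c : ℝ) :
    (s.image (c • ·)).inf' (hs.image _) power = c ^ 2 * s.inf' hs power := by
  rw [inf'_image]
  simp_rw [Function.comp_def, power_smul]
  exact (map_finset_inf' (OrderHom.mk (c ^ 2 * ·) (monotone_mul_left_of_nonneg (sq_nonneg c)))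
    hs power).symm

/-- Shrink the code until its minimum power is `thr`. -/
lemma mul_le_integral_abs_excessDensity_of_lt_power {N thr b : ℝ} (hN : 0 < N) (hthr : 0 < thr)
    (hbound : ∀ (s : Finset (ι → ℝ)) (hs : s.Nonempty), s.inf' hs power = thr →
      2 * #s * b ≤ ∫ z, |excessDensity N s z|)
    {t : Finset (ι → ℝ)} (ht : ∀ x ∈ t, thr < power x) :
    2 * #t * b ≤ ∫ z, |excessDensity N t z| := by
  rcases t.eq_empty_or_nonempty with rfl | htne
  · simp [excessDensity]
  set P := t.inf' htne power
  have hP : thr < P := (lt_inf'_iff htne).2 ht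
  have hP0 : 0 < P := hthr.trans hP
  set c := Real.sqrt (thr / P)
  have hc_sq : c ^ 2 = thr / P := Real.sq_sqrt (by positivity)
  have hc0 : c ≠ 0 := (Real.sqrt_pos.2 (by positivity)).ne'
  have hc1 : c ^ 2 < 1 := by rw [hc_sq]; exact (div_lt_one hP0).2 hP
  have hmin : (t.image (c • ·)).inf' (htne.image _) power = thr := by
    rw [inf'_image_smul_power htne, hc_sq, div_mul_cancel₀ _ hP0.ne']
  calc 2 * #t * b = 2 * #(t.image (c • ·)) * b := by
        rw [card_image_of_injective _ (smul_right_injective _ hc0)]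
    _ ≤ ∫ z, |excessDensity N (t.image (c • ·)) z| := hbound _ _ hmin
    _ ≤ ∫ z, |excessDensity N t z| := integral_abs_excessDensity_image_smul_le hN hc0 hc1 t

end

lemma add_two_mul_le_one_sub_gaussQ {Nw ν₁ ν₂ δ γ ν t n : ℝ} (hNw : 0 < Nw) (hn : 0 < n)
    (hQ : gaussQ t = (1 - δ) / 2 - 2 * ν ^ 2 / (Real.sqrt (Real.pi * n) * Nw ^ 2) - γ)
    (hA : (Real.sqrt 2 * Nw * t) ^ 2 + Real.sqrt Real.pi * Nw ^ 2 * (ν₁ + ν₂) ≤ 4 * ν ^ 2) :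
    δ + 2 * γ ≤ 1 - 2 * gaussQ (Real.sqrt 2 * Nw * t * Real.sqrt n / (Real.sqrt (2 * n) * Nw))
      - (Real.sqrt 2 * Nw * t * Real.sqrt n) ^ 2
          / (Real.sqrt Real.pi * Nw ^ 2 * n ^ ((3 : ℝ) / 2))
      - (ν₁ + ν₂) / Real.sqrt n := by
  have hD : 0 < Real.sqrt Real.pi * Nw ^ 2 * Real.sqrt n := by positivity
  have harg : Real.sqrt 2 * Nw * t * Real.sqrt n / (Real.sqrt (2 * n) * Nw) = t := by
    rw [Real.sqrt_mul zero_le_two]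
    field_simp
  have hpow : n ^ ((3 : ℝ) / 2) = n * Real.sqrt n := by
    rw [show (3 : ℝ) / 2 = 1 + 1 / 2 by norm_num, Real.rpow_add hn, Real.rpow_one,
      Real.sqrt_eq_rpow]
  have hsq : (Real.sqrt 2 * Nw * t * Real.sqrt n) ^ 2 = (Real.sqrt 2 * Nw * t) ^ 2 * n := by
    rw [mul_pow, Real.sq_sqrt hn.le]
  rw [harg, hQ, hpow, hsq, Real.sqrt_mul Real.pi_pos.le]
  have hgap : 1 - 2 * ((1 - δ) / 2 - 2 * ν ^ 2 / (Real.sqrt Real.pi * Real.sqrt n * Nw ^ 2) - γ)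
        - (Real.sqrt 2 * Nw * t) ^ 2 * n / (Real.sqrt Real.pi * Nw ^ 2 * (n * Real.sqrt n))
        - (ν₁ + ν₂) / Real.sqrt n
      = δ + 2 * γ + (4 * ν ^ 2 - ((Real.sqrt 2 * Nw * t) ^ 2
          + Real.sqrt Real.pi * Nw ^ 2 * (ν₁ + ν₂)))
          / (Real.sqrt Real.pi * Nw ^ 2 * Real.sqrt n) := by
    field_simp
    ring
  rw [hgap]
  linarith [div_nonneg (sub_nonneg.2 hA) hD.le]

theorem low_power_subcode_general (Nw : ℝ) (hNw : 0 < Nw) (ν₁ ν₂ : ℝ)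
    (h14 : ∀ (n : ℕ), 1 ≤ n → ∀ (𝒞 : Finset (Fin n → ℝ)) (h𝒞 : 𝒞.Nonempty),
      1 - 2 * gaussQ ((𝒞.inf' h𝒞 fun x => ∑ i, (x i) ^ 2) / (Real.sqrt (2 * n) * Nw))
        - (𝒞.inf' h𝒞 fun x => ∑ i, (x i) ^ 2) ^ 2 /
            (Real.sqrt Real.pi * Nw ^ 2 * (n : ℝ) ^ ((3 : ℝ) / 2))
        - (ν₁ + ν₂) / Real.sqrt n
      ≤ (1 / 2) * ∫ z : Fin n → ℝ,
          |((𝒞.card : ℝ))⁻¹ * (∑ x ∈ 𝒞, ∏ i, qa Nw (x i) (z i)) - ∏ i, q0 Nw (z i)|)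
    (δ γ ν : ℝ) (n : ℕ) (hn : 1 ≤ n)
    (hθ : (1 - δ) / 2 - 2 * ν ^ 2 / (Real.sqrt (Real.pi * n) * Nw ^ 2) - γ
            ∈ Set.Ioo (0 : ℝ) (1 / 2))
    (tθ : ℝ) (htθ : 0 < tθ)
    (hQθ : gaussQ tθ = (1 - δ) / 2 - 2 * ν ^ 2 / (Real.sqrt (Real.pi * n) * Nw ^ 2) - γ)
    (hA : (Real.sqrt 2 * Nw * tθ) ^ 2 + Real.sqrt Real.pi * Nw ^ 2 * (ν₁ + ν₂) ≤ 4 * ν ^ 2) :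
    ∀ (𝒞 : Finset (Fin n → ℝ)), 𝒞.Nonempty →
      (1 / 2) * (∫ z : Fin n → ℝ,
          |((𝒞.card : ℝ))⁻¹ * (∑ x ∈ 𝒞, ∏ i, qa Nw (x i) (z i)) - ∏ i, q0 Nw (z i)|) ≤ δ →
      γ * (𝒞.card : ℝ) ≤
        ((𝒞.filter fun x => ∑ i, (x i) ^ 2 ≤ Real.sqrt 2 * Nw * tθ * Real.sqrt n).card : ℝ) := by
  intro 𝒞 h𝒞 hV
  have hn0 : (0 : ℝ) < n := by exact_mod_cast hn
  set thr := Real.sqrt 2 * Nw * tθ * Real.sqrt n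
  have hthr : 0 < thr := by positivity
  have hδγ : δ + 2 * γ ≤ 1 := by
    have : 0 ≤ 2 * ν ^ 2 / (Real.sqrt (Real.pi * n) * Nw ^ 2) := by positivity
    linarith [hθ.1]
  have hbound : ∀ (s : Finset (Fin n → ℝ)) (hs : s.Nonempty), s.inf' hs power = thr →
      2 * #s * (δ + 2 * γ) ≤ ∫ z, |excessDensity Nw s z| := fun s hs hmin => by
    have h := (add_two_mul_le_one_sub_gaussQ hNw hn0 hQθ hA).trans (hmin ▸ h14 n hn s hs)
    rwa [half_integral_abs_sub_eq hs, le_div_iff₀ (by positivity), mul_comm] at h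
  have hhigh := mul_le_integral_abs_excessDensity_of_lt_power hNw hthr hbound
    (t := 𝒞.filter fun x => ¬power x ≤ thr) fun x hx => not_le.1 (mem_filter.1 hx).2
  have hsplit := integral_abs_excessDensity_sdiff_le hNw (filter_subset (power · ≤ thr) 𝒞)
  rw [← filter_not] at hsplit
  rw [half_integral_abs_sub_eq h𝒞, div_le_iff₀ (by positivity)] at hV
  change γ * #𝒞 ≤ #(𝒞.filter fun x => power x ≤ thr)
  have hcard : (#(𝒞.filter fun x => power x ≤ thr) : ℝ) + #(𝒞.filter fun x => ¬power x ≤ thr)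
      = #𝒞 := by exact_mod_cast card_filter_add_card_filter_not _
  nlinarith [mul_le_mul_of_nonneg_left hδγ
    (Nat.cast_nonneg (α := ℝ) #(𝒞.filter fun x => power x ≤ thr))]

/-- Any code whose induced output density is within variational distance `δ` of the all-noise
density contains a proportion at least `γ` of "low-power" codewords of power at most `A √n`. -/
theorem low_power_subcode (Nw : ℝ) (hNw : 0 < Nw) (ν₁ ν₂ : ℝ) (hν₁ : 0 < ν₁) (hν₂ : 0 < ν₂)
    (h14 : ∀ (n : ℕ), 1 ≤ n → ∀ (𝒞 : Finset (Fin n → ℝ)) (h𝒞 : 𝒞.Nonempty),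
      1 - 2 * gaussQ ((𝒞.inf' h𝒞 fun x => ∑ i, (x i) ^ 2) / (Real.sqrt (2 * n) * Nw))
        - (𝒞.inf' h𝒞 fun x => ∑ i, (x i) ^ 2) ^ 2 /
            (Real.sqrt Real.pi * Nw ^ 2 * (n : ℝ) ^ ((3 : ℝ) / 2))
        - (ν₁ + ν₂) / Real.sqrt n
      ≤ (1 / 2) * ∫ z : Fin n → ℝ,
          |((𝒞.card : ℝ))⁻¹ * (∑ x ∈ 𝒞, ∏ i, qa Nw (x i) (z i)) - ∏ i, q0 Nw (z i)|)
    (δ γ ν : ℝ) (n : ℕ) (hn : 1 ≤ n) (hδ : δ ∈ Set.Ioo (0 : ℝ) 1)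
    (hγ : γ ∈ Set.Icc (0 : ℝ) 1) (hν : 0 < ν)
    (hθ : (1 - δ) / 2 - 2 * ν ^ 2 / (Real.sqrt (Real.pi * n) * Nw ^ 2) - γ
            ∈ Set.Ioo (0 : ℝ) (1 / 2))
    (tθ : ℝ) (htθ : 0 < tθ)
    (hQθ : gaussQ tθ = (1 - δ) / 2 - 2 * ν ^ 2 / (Real.sqrt (Real.pi * n) * Nw ^ 2) - γ)
    (hA : (Real.sqrt 2 * Nw * tθ) ^ 2 + Real.sqrt Real.pi * Nw ^ 2 * (ν₁ + ν₂) ≤ 4 * ν ^ 2) :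
    ∀ (𝒞 : Finset (Fin n → ℝ)), 𝒞.Nonempty →
      (1 / 2) * (∫ z : Fin n → ℝ,
          |((𝒞.card : ℝ))⁻¹ * (∑ x ∈ 𝒞, ∏ i, qa Nw (x i) (z i)) - ∏ i, q0 Nw (z i)|) ≤ δ →
      γ * (𝒞.card : ℝ) ≤
        ((𝒞.filter fun x => ∑ i, (x i) ^ 2 ≤ Real.sqrt 2 * Nw * tθ * Real.sqrt n).card : ℝ) :=
  low_power_subcode_general Nw hNw ν₁ ν₂ h14 δ γ ν n hn hθ tθ htθ hQθ hA
end

section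
/- Let N > 0 and let X be a real random variable with law μ and E[X²] < ∞. Let q̄(z) = ∫_ℝ (πN)^{−1/2}·exp(−(z−x)²/N) dμ(x) be the density of X + W, where W ~ 𝒩(0, N/2) is independent of X, and let q₀(z) = (πN)^{−1/2}·exp(−z²/N). Then the Kullback–Leibler divergence (possibly +∞) satisfies D(q̄ ‖ q₀) = ∫_ℝ q̄(z)·log(q̄(z)/q₀(z)) dz ≥ E[X²]/N − ½·log(1 + 2·E[X²]/N). -/
open MeasureTheory

/-! Gibbs' inequality: for every probability density `g`,
`∫ q̄ log (q̄ / q₀) ≥ ∫ q̄ log (g / q₀)`. Take for `g` the centred Gaussian whose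
variance `N/2 + E[X²]` is the second moment of `q̄`. Then `log (g / q₀)` is a quadratic
`c + b z²`, so the right-hand side only involves `∫ q̄ = 1` and `∫ z² q̄ = N/2 + E[X²]`
(Fubini and the Gaussian moments), and equals `E[X²]/N − ½ log (1 + 2 E[X²]/N)`. -/

open ProbabilityTheory Real
open scoped NNReal

lemma mul_log_div_add_sub_le_mul_log_div {p g r : ℝ} (hp : 0 < p) (hg : 0 < g) (hr : 0 < r) :
    p * log (g / r) + (p - g) ≤ p * log (p / r) := by
  have hgp : log (g / p) ≤ g / p - 1 := log_le_sub_one_of_pos (div_pos hg hp)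
  have hsplit : log (p / r) = log (g / r) - log (g / p) := by
    rw [log_div hp.ne' hr.ne', log_div hg.ne' hr.ne', log_div hg.ne' hp.ne']; ring
  rw [hsplit]
  have : p * (g / p - 1) = g - p := by field_simp
  nlinarith [mul_le_mul_of_nonneg_left hgp hp.le]

theorem integral_mul_log_div_le_of_integral_le {α : Type*} [MeasurableSpace α] {μ : Measure α}
    {p g r : α → ℝ} (hp : ∀ x, 0 < p x) (hg : ∀ x, 0 < g x) (hr : ∀ x, 0 < r x)
    (hpi : Integrable p μ) (hgi : Integrable g μ) (hgp : ∫ x, g x ∂μ ≤ ∫ x, p x ∂μ)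
    (hpg : Integrable (fun x => p x * log (g x / r x)) μ)
    (hpp : Integrable (fun x => p x * log (p x / r x)) μ) :
    ∫ x, p x * log (g x / r x) ∂μ ≤ ∫ x, p x * log (p x / r x) ∂μ := by
  have hpgi : Integrable (fun x => p x - g x) μ := hpi.sub hgi
  have hmono :
      ∫ x, (p x * log (g x / r x) + (p x - g x)) ∂μ ≤ ∫ x, p x * log (p x / r x) ∂μ :=
    integral_mono (hpg.add hpgi) hpp
      fun x => mul_log_div_add_sub_le_mul_log_div (hp x) (hg x) (hr x)
  rw [integral_add hpg hpgi, integral_sub hpi hgi] at hmono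
  linarith

lemma integrable_prod_of_nonneg {α β : Type*} [MeasurableSpace α] [MeasurableSpace β]
    {μ : Measure α} {ν : Measure β} [SFinite ν] {f : α × β → ℝ}
    (hf : AEStronglyMeasurable f (μ.prod ν)) (hf0 : 0 ≤ f)
    (hfx : ∀ x, Integrable (fun y => f (x, y)) ν)
    (hint : Integrable (fun x => ∫ y, f (x, y) ∂ν) μ) : Integrable f (μ.prod ν) := by
  refine (integrable_prod_iff hf).2 ⟨ae_of_all _ hfx, ?_⟩
  simpa only [norm_of_nonneg (hf0 _)] using hint

lemma gaussianPDFReal_le (m : ℝ) (v : ℝ≥0) (x : ℝ) :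
    gaussianPDFReal m v x ≤ (√(2 * π * v))⁻¹ := by
  rw [gaussianPDFReal]
  refine mul_le_of_le_one_right (by positivity) (exp_le_one_iff.2 ?_)
  exact div_nonpos_of_nonpos_of_nonneg (neg_nonpos.2 (sq_nonneg _)) (by positivity)

lemma log_gaussianPDFReal {v : ℝ≥0} (hv : v ≠ 0) (m x : ℝ) :
    log (gaussianPDFReal m v x) = -log (2 * π * v) / 2 - (x - m) ^ 2 / (2 * v) := by
  have : (0 : ℝ) < 2 * π * v := by positivity
  rw [gaussianPDFReal, log_mul (by positivity) (exp_ne_zero _), log_inv, log_sqrt this.le, log_exp]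
  ring

lemma log_gaussianPDFReal_div_gaussianPDFReal {v w : ℝ≥0} (hv : v ≠ 0) (hw : w ≠ 0)
    (z : ℝ) :
    log (gaussianPDFReal 0 w z / gaussianPDFReal 0 v z) =
      log (v / w) / 2 + (1 / (2 * v) - 1 / (2 * w)) * z ^ 2 := by
  have hv' : (v : ℝ) ≠ 0 := by positivity
  have hw' : (w : ℝ) ≠ 0 := by positivity
  rw [log_div (gaussianPDFReal_pos _ _ _ hw).ne' (gaussianPDFReal_pos _ _ _ hv).ne',
    log_gaussianPDFReal hw, log_gaussianPDFReal hv, log_div hv' hw',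
    log_mul (by positivity) hw', log_mul (by positivity) hv']
  field_simp
  ring

lemma integral_sq_gaussianReal (m : ℝ) (v : ℝ≥0) :
    ∫ x, x ^ 2 ∂gaussianReal m v = v + m ^ 2 := by
  have := variance_eq_sub (memLp_id_gaussianReal (μ := m) (v := v) 2)
  simp only [variance_id_gaussianReal, Pi.pow_apply, id_eq, integral_id_gaussianReal] at this
  linarith

lemma integrable_sq_mul_gaussianPDFReal (m : ℝ) {v : ℝ≥0} (hv : v ≠ 0) :
    Integrable (fun x => x ^ 2 * gaussianPDFReal m v x) := by
  have h := (memLp_id_gaussianReal (μ := m) (v := v) 2).integrable_sq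
  rw [gaussianReal_of_var_ne_zero _ hv, integrable_withDensity_iff_integrable_smul'
    (measurable_gaussianPDF _ _) (ae_of_all _ fun _ => gaussianPDF_lt_top)] at h
  simpa [mul_comm] using h

lemma integral_sq_mul_gaussianPDFReal (m : ℝ) {v : ℝ≥0} (hv : v ≠ 0) :
    ∫ x, x ^ 2 * gaussianPDFReal m v x = v + m ^ 2 := by
  rw [← integral_sq_gaussianReal, integral_gaussianReal_eq_integral_smul hv]
  simp [mul_comm]

lemma integrable_gaussianPDFReal_mean {μ : Measure ℝ} [IsFiniteMeasure μ] (v : ℝ≥0)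
    (z : ℝ) :
    Integrable (fun x => gaussianPDFReal x v z) μ := by
  refine Integrable.mono' (integrable_const (√(2 * π * v))⁻¹) ?_
    (ae_of_all _ fun x => ?_)
  · exact (measurable_uncurry_gaussianPDFReal.comp
      (measurable_id.prodMk (measurable_const (a := (v, z))))).aestronglyMeasurable
  · rw [norm_of_nonneg (gaussianPDFReal_nonneg _ _ _)]
    exact gaussianPDFReal_le _ _ _

/-- The density of `μ ∗ gaussianReal 0 v`, i.e. of `X + W` for independent `X ∼ μ` and
`W ∼ 𝒩(0, v)`. -/
noncomputable def gaussianMixturePDF (μ : Measure ℝ) (v : ℝ≥0) (z : ℝ) : ℝ :=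
  ∫ x, gaussianPDFReal x v z ∂μ

section GaussianMixture

variable {μ : Measure ℝ} {v : ℝ≥0}

lemma gaussianMixturePDF_pos [IsFiniteMeasure μ] [NeZero μ] (hv : v ≠ 0) (z : ℝ) :
    0 < gaussianMixturePDF μ v z := by
  refine (integral_pos_iff_support_of_nonneg (fun x => gaussianPDFReal_nonneg _ _ _)
    (integrable_gaussianPDFReal_mean v z)).2 ?_
  have : Function.support (fun x => gaussianPDFReal x v z) = Set.univ :=
    Set.eq_univ_of_forall fun x => (gaussianPDFReal_pos _ _ _ hv).ne'
  simp [this, NeZero.ne μ]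

lemma integrable_uncurry_gaussianPDFReal [IsFiniteMeasure μ] (hv : v ≠ 0) :
    Integrable (fun p : ℝ × ℝ => gaussianPDFReal p.1 v p.2) (μ.prod volume) := by
  refine integrable_prod_of_nonneg ?_ (fun p => gaussianPDFReal_nonneg _ _ _)
    (fun x => integrable_gaussianPDFReal x v) ?_
  · exact (measurable_uncurry_gaussianPDFReal.comp
      (measurable_fst.prodMk (measurable_const.prodMk measurable_snd))).aestronglyMeasurable
  · simp only [integral_gaussianPDFReal_eq_one _ hv]
    exact integrable_const 1

lemma integrable_gaussianMixturePDF [IsFiniteMeasure μ] (hv : v ≠ 0) :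
    Integrable (gaussianMixturePDF μ v) :=
  (integrable_uncurry_gaussianPDFReal hv).integral_prod_right

lemma integral_gaussianMixturePDF [IsProbabilityMeasure μ] (hv : v ≠ 0) :
    ∫ z, gaussianMixturePDF μ v z = 1 := by
  simp only [gaussianMixturePDF]
  rw [← integral_integral_swap (f := fun x z => gaussianPDFReal x v z)
    (integrable_uncurry_gaussianPDFReal hv)]
  simp [integral_gaussianPDFReal_eq_one _ hv]

lemma integrable_uncurry_sq_mul_gaussianPDFReal [IsFiniteMeasure μ] (hv : v ≠ 0)
    (hX : Integrable (fun x => x ^ 2) μ) :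
    Integrable (fun p : ℝ × ℝ => p.2 ^ 2 * gaussianPDFReal p.1 v p.2) (μ.prod volume) := by
  refine integrable_prod_of_nonneg ?_
    (fun p => mul_nonneg (sq_nonneg _) (gaussianPDFReal_nonneg _ _ _))
    (fun x => integrable_sq_mul_gaussianPDFReal x hv) ?_
  · exact (measurable_snd.pow_const 2).aestronglyMeasurable.mul
      (measurable_uncurry_gaussianPDFReal.comp
        (measurable_fst.prodMk (measurable_const.prodMk measurable_snd))).aestronglyMeasurable
  · simp only [integral_sq_mul_gaussianPDFReal _ hv]
    exact (integrable_const _).add hX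

lemma integrable_sq_mul_gaussianMixturePDF [IsFiniteMeasure μ] (hv : v ≠ 0)
    (hX : Integrable (fun x => x ^ 2) μ) :
    Integrable (fun z => z ^ 2 * gaussianMixturePDF μ v z) := by
  simpa only [gaussianMixturePDF, integral_const_mul] using
    (integrable_uncurry_sq_mul_gaussianPDFReal hv hX).integral_prod_right

lemma integral_sq_mul_gaussianMixturePDF [IsProbabilityMeasure μ] (hv : v ≠ 0)
    (hX : Integrable (fun x => x ^ 2) μ) :
    ∫ z, z ^ 2 * gaussianMixturePDF μ v z = v + ∫ x, x ^ 2 ∂μ := by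
  simp only [gaussianMixturePDF, ← integral_const_mul]
  rw [← integral_integral_swap (f := fun x z => z ^ 2 * gaussianPDFReal x v z)
    (integrable_uncurry_sq_mul_gaussianPDFReal hv hX)]
  simp only [integral_sq_mul_gaussianPDFReal _ hv]
  rw [integral_add (integrable_const _) hX]
  simp

end GaussianMixture

theorem integral_mul_log_gaussianMixturePDF_div_ge {μ : Measure ℝ} [IsProbabilityMeasure μ]
    {v : ℝ≥0} (hv : v ≠ 0) (hX : Integrable (fun x => x ^ 2) μ)
    (hInt : Integrable (fun z =>
      gaussianMixturePDF μ v z * log (gaussianMixturePDF μ v z / gaussianPDFReal 0 v z))) :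
    (∫ x, x ^ 2 ∂μ) / (2 * v) - log (1 + (∫ x, x ^ 2 ∂μ) / v) / 2 ≤
      ∫ z, gaussianMixturePDF μ v z *
        log (gaussianMixturePDF μ v z / gaussianPDFReal 0 v z) := by
  set m := ∫ x, x ^ 2 ∂μ
  set q := gaussianMixturePDF μ v
  have hm : 0 ≤ m := integral_nonneg fun x => sq_nonneg x
  set w : ℝ≥0 := v + m.toNNReal
  have hw : w ≠ 0 := by positivity
  have hw_coe : (w : ℝ) = v + m := by simp [w, hm]
  have hlog : ∀ z, q z * log (gaussianPDFReal 0 w z / gaussianPDFReal 0 v z) =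
      log (v / w) / 2 * q z + (1 / (2 * v) - 1 / (2 * w)) * (z ^ 2 * q z) := fun z => by
    rw [log_gaussianPDFReal_div_gaussianPDFReal hv hw]; ring
  have hq := integrable_gaussianMixturePDF (μ := μ) hv
  have hq2 := integrable_sq_mul_gaussianMixturePDF hv hX
  have hcross :
      Integrable (fun z => q z * log (gaussianPDFReal 0 w z / gaussianPDFReal 0 v z)) := by
    simp only [hlog]
    exact (hq.const_mul _).add (hq2.const_mul _)
  calc m / (2 * v) - log (1 + m / v) / 2
      = log (v / w) / 2 + (1 / (2 * v) - 1 / (2 * w)) * (v + m) := by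
        have hv' : (v : ℝ) ≠ 0 := by positivity
        rw [hw_coe, show (v : ℝ) / (v + m) = (1 + m / v)⁻¹ by field_simp, log_inv]
        field_simp
        ring
    _ = ∫ z, q z * log (gaussianPDFReal 0 w z / gaussianPDFReal 0 v z) := by
        simp only [hlog]
        rw [integral_add (hq.const_mul _) (hq2.const_mul _), integral_const_mul,
          integral_const_mul, integral_gaussianMixturePDF hv,
          integral_sq_mul_gaussianMixturePDF hv hX]
        ring
    _ ≤ ∫ z, q z * log (q z / gaussianPDFReal 0 v z) :=
        integral_mul_log_div_le_of_integral_le (gaussianMixturePDF_pos hv)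
          (gaussianPDFReal_pos _ _ · hw) (gaussianPDFReal_pos _ _ · hv) hq
          (integrable_gaussianPDFReal 0 w)
          (by rw [integral_gaussianMixturePDF hv, integral_gaussianPDFReal_eq_one _ hw])
          hcross hInt

lemma qa_eq_gaussianPDFReal (N a z : ℝ) : qa N a z = gaussianPDFReal a (N / 2).toNNReal z := by
  rcases le_or_gt N 0 with hN | hN
  · rw [Real.toNNReal_of_nonpos (by linarith), gaussianPDFReal_zero_var, qa,
      Real.sqrt_eq_zero'.2 (mul_nonpos_of_nonneg_of_nonpos pi_pos.le hN)]
    simp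
  · rw [qa, gaussianPDFReal, Real.coe_toNNReal _ (by positivity)]
    ring_nf

lemma q0_eq_gaussianPDFReal (N z : ℝ) : q0 N z = gaussianPDFReal 0 (N / 2).toNNReal z := by
  rw [← qa_eq_gaussianPDFReal, q0, qa, sub_zero]

/-- The KL divergence (possibly `+∞`, i.e. non-integrable) from the density `q̄` of `X + W`,
where `X ~ μ` and `W ~ 𝒩(0, N/2)` are independent, to the Gaussian density `q₀` is at least
`E[X²]/N − ½ log(1 + 2 E[X²]/N)`. -/
theorem kl_mixture_lower_bound (N : ℝ) (hN : 0 < N) (μ : Measure ℝ)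
    [IsProbabilityMeasure μ] (hX : Integrable (fun x => x ^ 2) μ)
    (hInt : Integrable (fun z =>
      (∫ x, qa N x z ∂μ) * Real.log ((∫ x, qa N x z ∂μ) / q0 N z))) :
    (∫ x, x ^ 2 ∂μ) / N - (1 / 2) * Real.log (1 + 2 * (∫ x, x ^ 2 ∂μ) / N) ≤
      ∫ z : ℝ, (∫ x, qa N x z ∂μ) * Real.log ((∫ x, qa N x z ∂μ) / q0 N z) := by
  have hv : (N / 2).toNNReal ≠ 0 := by simpa using hN
  have hv_coe : ((N / 2).toNNReal : ℝ) = N / 2 := Real.coe_toNNReal _ (by positivity)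
  have hmix : ∀ z, ∫ x, qa N x z ∂μ = gaussianMixturePDF μ (N / 2).toNNReal z := fun z => by
    simp only [qa_eq_gaussianPDFReal, gaussianMixturePDF]
  simp only [hmix, q0_eq_gaussianPDFReal] at hInt ⊢
  have key := integral_mul_log_gaussianMixturePDF_div_ge hv hX hInt
  rw [hv_coe] at key
  convert key using 3
  · ring
  · rw [div_div_eq_mul_div, mul_comm _ (2 : ℝ)]
    ring
end
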